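/- Let E be a Banach space containing no subspace isomorphic to c_0. Let (e_i) be a sequence in E such that there exists C > 0 with ∑_{i=1}^∞ |⟨e*, e_i⟩| ≤ C for every e* in the unit sphere of E*. Then the series ∑ e_i converges unconditionally in E. -/

import Mathlib

open Set ZeroAtInfty Ordinal

noncomputable section

/-- Iterated Cantor–Bendixson derivative, indexed by ordinals. -/
def cbDeriv {S : Type*} [TopologicalSpace S] (F : Set S) : Ordinal → Set S :=
  fun o => Ordinal.limitRecOn o F (fun _ ih => derivedSet ih)
    (fun o _ ih => ⋂ (β : {β // β < o}), ih β β.2)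

/-- The function `f ⊗ e : x ↦ f x • e`. -/
def tensor {K : Type*} [TopologicalSpace K] {E : Type*} [NormedAddCommGroup E]
    [NormedSpace ℝ E] (f : C(K, ℝ)) (e : E) : C(K, E) :=
  ⟨fun x => f x • e, (map_continuous f).smul continuous_const⟩

/-- `E` contains an isomorphic copy of `c₀`. -/
def ContainsCopyOfC0 (E : Type*) [NormedAddCommGroup E] [NormedSpace ℝ E] : Prop :=
  ∃ T : C₀(ℕ, ℝ) →L[ℝ] E, ∃ c > 0, ∀ x, c * ‖x‖ ≤ ‖T x‖

/-- The canonical scalar function space associated to `H ⊆ C(K,E)`: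
the closed linear span of `{e* ∘ h : e* ∈ E*, h ∈ H}`. -/
def scalarSpace {K : Type*} [TopologicalSpace K] [CompactSpace K]
    {E : Type*} [NormedAddCommGroup E] [NormedSpace ℝ E]
    (H : Submodule ℝ C(K, E)) : Submodule ℝ C(K, ℝ) :=
  (Submodule.span ℝ {f : C(K, ℝ) | ∃ φ : E →L[ℝ] ℝ, ∃ h ∈ H,
      f = ⟨fun x => φ (h x), φ.continuous.comp (map_continuous h)⟩}).topologicalClosure

/-- The evaluation functional `i(x) : A → ℝ`, `h ↦ h x`. -/
def evalFun {K : Type*} [TopologicalSpace K] [CompactSpace K]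
    (A : Submodule ℝ C(K, ℝ)) (x : K) : ↥A →L[ℝ] ℝ :=
  LinearMap.mkContinuous
    { toFun := fun h => (h : C(K, ℝ)) x
      map_add' := fun a b => rfl
      map_smul' := fun c a => rfl } 1
    (fun h => by simpa using (h : C(K, ℝ)).norm_coe_le_norm x)

/-- The Choquet boundary of `H ⊆ C(K,E)`: points whose evaluation functional is an
extreme point of the dual unit ball of the associated scalar space. -/
def ChoquetBoundary {K : Type*} [TopologicalSpace K] [CompactSpace K]
    {E : Type*} [NormedAddCommGroup E] [NormedSpace ℝ E]
    (H : Submodule ℝ C(K, E)) : Set K :=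
  {x | evalFun (scalarSpace H) x ∈
      Set.extremePoints ℝ (@Metric.closedBall (↥(scalarSpace H) →L[ℝ] ℝ)
        (ContinuousLinearMap.toSeminormedAddCommGroup (𝕜 := ℝ) (𝕜₂ := ℝ) (E := ↥(scalarSpace H))
          (F := ℝ) (σ₁₂ := RingHom.id ℝ)).toPseudoMetricSpace 0 1)}

/-- `A^E`: elements `f` of the scalar space with `f ⊗ e ∈ H` for all `e`. -/
def AE {K : Type*} [TopologicalSpace K] [CompactSpace K]
    {E : Type*} [NormedAddCommGroup E] [NormedSpace ℝ E]
    (H : Submodule ℝ C(K, E)) : Set C(K, ℝ) :=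
  {f | f ∈ scalarSpace H ∧ ∀ e : E, tensor f e ∈ H}

/-- Weak peak point of `H ⊆ C(K,E)`. -/
def IsWeakPeakPoint {K : Type*} [TopologicalSpace K] [CompactSpace K]
    {E : Type*} [NormedAddCommGroup E] [NormedSpace ℝ E]
    (H : Submodule ℝ C(K, E)) (x : K) : Prop :=
  ∀ U ∈ nhds x, ∀ ε ∈ Set.Ioo (0 : ℝ) 1, ∃ f ∈ AE H,
    (∀ y, f y ∈ Set.Icc (0 : ℝ) 1) ∧ 1 - ε < f x ∧
      ∀ y ∈ ChoquetBoundary H \ U, f y < ε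

/-- `Ω_H = { y : ∃ g ∈ H, g y ≠ 0 }`. -/
def OmegaSet {K : Type*} [TopologicalSpace K] [CompactSpace K]
    {E : Type*} [NormedAddCommGroup E] [NormedSpace ℝ E]
    (H : Submodule ℝ C(K, E)) : Set K :=
  {y | ∃ g ∈ H, (g : C(K, E)) y ≠ 0}


/-- For a finite set of vectors and δ>0, there is a finite set of norm-≤1 functionals
which (1-δ)-norms every element of the span. -/
lemma net_lemma {E : Type*} [NormedAddCommGroup E] [NormedSpace ℝ E]
    (v : Finset E) {δ : ℝ} (hδ : 0 < δ) :
    ∃ Ψ : Finset (E →L[ℝ] ℝ), (∀ ψ ∈ Ψ, ‖ψ‖ ≤ 1) ∧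
      ∀ f ∈ Submodule.span ℝ (v : Set E), ∃ ψ ∈ Ψ, (1 - δ) * ‖f‖ ≤ |ψ f| := by
  classical
  set F := Submodule.span ℝ (v : Set E)
  haveI : FiniteDimensional ℝ F := FiniteDimensional.span_of_finite ℝ v.finite_toSet
  set S : Set E := Subtype.val '' (Metric.sphere (0 : F) 1) with hS_def
  have hS : IsCompact S := (isCompact_sphere (0 : F) 1).image continuous_subtype_val
  have hSnorm : ∀ g ∈ S, ‖g‖ = 1 := by
    rintro g ⟨g', hg', rfl⟩
    simpa using mem_sphere_zero_iff_norm.mp hg'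
  have hSne : ∀ g ∈ S, g ≠ 0 := by
    intro g hg h0
    have := hSnorm g hg; rw [h0, norm_zero] at this; norm_num at this
  set Φ : E → (E →L[ℝ] ℝ) := fun g =>
    if hg : g = 0 then 0 else (exists_dual_vector ℝ g (norm_ne_zero_iff.mpr hg)).choose with hΦ_def
  have hΦ : ∀ g : E, g ≠ 0 → ‖Φ g‖ = 1 ∧ Φ g g = ‖g‖ := by
    intro g hg
    have := (exists_dual_vector ℝ g (norm_ne_zero_iff.mpr hg)).choose_spec
    simp only [hΦ_def, dif_neg hg]
    exact this
  obtain ⟨G, hGS, hGcov⟩ := hS.elim_nhds_subcover (fun g => Metric.ball g δ)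
    (fun g _ => Metric.ball_mem_nhds g hδ)
  refine ⟨insert 0 (G.image Φ), ?_, ?_⟩
  · intro ψ hψ
    rcases Finset.mem_insert.mp hψ with rfl | hψ
    · simp
    · obtain ⟨g, hg, rfl⟩ := Finset.mem_image.mp hψ
      exact le_of_eq (hΦ g (hSne g (hGS g hg))).1
  · intro f hf
    rcases eq_or_ne f 0 with rfl | hf0
    · exact ⟨0, Finset.mem_insert_self _ _, by simp⟩
    · set u : E := ‖f‖⁻¹ • f with hu_def
      have hfnorm : 0 < ‖f‖ := norm_pos_iff.mpr hf0
      have huF : u ∈ F := F.smul_mem _ hf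
      have hunorm : ‖u‖ = 1 := by
        rw [hu_def, norm_smul, norm_inv, norm_norm, inv_mul_cancel₀ hfnorm.ne']
      have huS : u ∈ S := ⟨⟨u, huF⟩, mem_sphere_zero_iff_norm.mpr hunorm, rfl⟩
      obtain ⟨g, hgG, hgu⟩ := Set.mem_iUnion₂.mp (hGcov huS)
      have hgS : g ∈ S := hGS g hgG
      have hgne : g ≠ 0 := hSne g hgS
      obtain ⟨hΦg_norm, hΦg_val⟩ := hΦ g hgne
      refine ⟨Φ g, Finset.mem_insert_of_mem (Finset.mem_image_of_mem _ hgG), ?_⟩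
      have h1 : |Φ g u| ≥ 1 - δ := by
        have h2 : |Φ g (u - g)| ≤ δ := by
          calc |Φ g (u - g)| ≤ ‖Φ g‖ * ‖u - g‖ := (Φ g).le_opNorm _
            _ ≤ 1 * δ := by
                refine mul_le_mul (le_of_eq hΦg_norm) ?_ (norm_nonneg _) zero_le_one
                exact le_of_lt (mem_ball_iff_norm.mp hgu)
            _ = δ := one_mul δ
        have h3 : Φ g u = Φ g g + Φ g (u - g) := by
          rw [← map_add]; congr 1; abel
        rw [h3, hΦg_val, hSnorm g hgS]
        rcases abs_cases (1 + Φ g (u - g)) with ⟨he, _⟩ | ⟨he, _⟩ <;>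
          rcases abs_cases (Φ g (u - g)) with ⟨he2, _⟩ | ⟨he2, _⟩ <;>
          rw [he] <;> linarith
      have h4 : Φ g f = ‖f‖ * Φ g u := by
        rw [hu_def, map_smul, _root_.smul_eq_mul, ← mul_assoc, mul_inv_cancel₀ hfnorm.ne', one_mul]
      rw [h4, abs_mul, abs_of_pos hfnorm]
      calc (1 - δ) * ‖f‖ ≤ |Φ g u| * ‖f‖ := mul_le_mul_of_nonneg_right h1 hfnorm.le
        _ = ‖f‖ * |Φ g u| := mul_comm _ _

/-- tails of a wuC series are small against finitely many functionals -/
lemma tail_lemma {E : Type*} [NormedAddCommGroup E] [NormedSpace ℝ E] [CompleteSpace E] (e : ℕ → E) (C : ℝ)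
    (hwuc : ∀ φ : E →L[ℝ] ℝ, ∀ s : Finset ℕ, ∑ i ∈ s, |φ (e i)| ≤ C * ‖φ‖)
    (Ψ : Finset (E →L[ℝ] ℝ)) {δ : ℝ} (hδ : 0 < δ) (N₀ : ℕ) :
    ∃ N : ℕ, N₀ ≤ N ∧ ∀ ψ ∈ Ψ, ∀ u : Finset ℕ, (∀ i ∈ u, N ≤ i) →
      ∑ i ∈ u, |ψ (e i)| ≤ δ := by
  classical
  have hsumm : ∀ ψ : E →L[ℝ] ℝ, Summable (fun i => |ψ (e i)|) := by
    intro ψ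
    exact summable_of_sum_range_le (fun n => abs_nonneg _) (fun n => hwuc ψ (Finset.range n))
  have key : ∀ ψ : E →L[ℝ] ℝ, ∃ N : ℕ, ∀ u : Finset ℕ, (∀ i ∈ u, N ≤ i) →
      ∑ i ∈ u, |ψ (e i)| ≤ δ := by
    intro ψ
    obtain ⟨s, hs⟩ := (summable_iff_vanishing.mp (hsumm ψ)) (Metric.ball 0 δ)
      (Metric.ball_mem_nhds 0 hδ)
    refine ⟨s.sup id + 1, fun u hu => ?_⟩
    have hdisj : Disjoint u s := by
      rw [Finset.disjoint_left]
      intro i hi hi'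
      have h1 := hu i hi
      have h2 : i ≤ s.sup id := Finset.le_sup (f := id) hi'
      omega
    have := hs u hdisj
    rw [mem_ball_zero_iff, Real.norm_eq_abs] at this
    exact (le_abs_self _).trans this.le
  choose Nf hNf using key
  refine ⟨max N₀ (Ψ.sup Nf), le_max_left _ _, fun ψ hψ u hu => ?_⟩
  refine hNf ψ u (fun i hi => ?_)
  have := hu i hi
  have h2 : Nf ψ ≤ Ψ.sup Nf := Finset.le_sup hψ
  omega

lemma foldr_bound (l : List (Finset ℕ)) {s : Finset ℕ} (hs : s ∈ l) :
    s.sup id + 1 ≤ l.foldr (fun s m => max (s.sup id + 1) m) 0 := by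
  induction l with
  | nil => simp at hs
  | cons head tail ih =>
    rcases List.mem_cons.mp hs with rfl | hs
    · simp only [List.foldr_cons]; omega
    · have := ih hs; simp only [List.foldr_cons]; omega

lemma exists_blocks {E : Type*} [NormedAddCommGroup E] [NormedSpace ℝ E] [CompleteSpace E] (e : ℕ → E) (C : ℝ)
    (hwuc : ∀ φ : E →L[ℝ] ℝ, ∀ s : Finset ℕ, ∑ i ∈ s, |φ (e i)| ≤ C * ‖φ‖)
    {ε : ℝ} (hε : 0 < ε)
    (hns : ∀ s : Finset ℕ, ∃ t : Finset ℕ, Disjoint t s ∧ ε ≤ ‖∑ i ∈ t, e i‖) :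
    ∃ t : ℕ → Finset ℕ,
      (∀ k, ε ≤ ‖∑ i ∈ t k, e i‖) ∧
      (∀ j k, j < k → ∀ a ∈ t j, ∀ b ∈ t k, a < b) ∧
      (∀ k (f : E), f ∈ Submodule.span ℝ ((fun j => ∑ i ∈ t j, e i) '' Set.Iio k) →
        ∀ c : ℝ, ‖f‖ ≤ (1 + (1/2 : ℝ)^(k+2)) * ‖f + c • ∑ i ∈ t k, e i‖) := by
  classical
  -- one construction step
  have hstep : ∀ prev : List (Finset ℕ), ∃ tk : Finset ℕ,
      (∀ s ∈ prev, ∀ a ∈ s, ∀ b ∈ tk, a < b) ∧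
      ε ≤ ‖∑ i ∈ tk, e i‖ ∧
      (∀ f ∈ Submodule.span ℝ {y : E | ∃ s ∈ prev, y = ∑ i ∈ s, e i}, ∀ c : ℝ,
        ‖f‖ ≤ (1 + (1/2 : ℝ)^(prev.length + 2)) * ‖f + c • ∑ i ∈ tk, e i‖) := by
    intro prev
    set η : ℝ := (1/2 : ℝ)^(prev.length + 2) with hη_def
    have hη : 0 < η := by positivity
    set δ : ℝ := η * ε / ((1 + η) * (ε + 2)) with hδ_def
    have hδ : 0 < δ := by positivity
    -- the net
    obtain ⟨Ψ, hΨ1, hΨ2⟩ := net_lemma ((prev.map (fun s => ∑ i ∈ s, e i)).toFinset) hδ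
    have hspan : {y : E | ∃ s ∈ prev, y = ∑ i ∈ s, e i}
        = ((prev.map (fun s => ∑ i ∈ s, e i)).toFinset : Set E) := by
      ext y
      simp only [Set.mem_setOf_eq, Finset.coe_sort_coe, Finset.mem_coe,
        List.mem_toFinset, List.mem_map]
      constructor
      · rintro ⟨s, hs, rfl⟩; exact ⟨s, hs, rfl⟩
      · rintro ⟨s, hs, rfl⟩; exact ⟨s, hs, rfl⟩
    -- bound for previous indices
    set N₀ : ℕ := prev.foldr (fun s m => max (s.sup id + 1) m) 0 with hN₀_def
    have hN₀ : ∀ s ∈ prev, ∀ a ∈ s, a < N₀ := by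
      intro s hs a ha
      have h1 : a ≤ s.sup id := Finset.le_sup (f := id) ha
      have h2 : s.sup id + 1 ≤ N₀ := foldr_bound prev hs
      omega
    obtain ⟨N, hNN₀, hN⟩ := tail_lemma e C hwuc Ψ hδ N₀
    obtain ⟨tk, htk_disj, htk_norm⟩ := hns (Finset.range N)
    have htk_ge : ∀ b ∈ tk, N ≤ b := by
      intro b hb
      by_contra hlt
      exact (Finset.disjoint_left.mp htk_disj hb (Finset.mem_range.mpr (by omega))).elim
    set xk : E := ∑ i ∈ tk, e i with hxk_def
    have hxk_small : ∀ ψ ∈ Ψ, |ψ xk| ≤ δ := by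
      intro ψ hψ
      calc |ψ xk| = |∑ i ∈ tk, ψ (e i)| := by rw [hxk_def, map_sum]
        _ ≤ ∑ i ∈ tk, |ψ (e i)| := Finset.abs_sum_le_sum_abs _ _
        _ ≤ δ := hN ψ hψ tk htk_ge
    refine ⟨tk, ?_, htk_norm, ?_⟩
    · intro s hs a ha b hb
      have := hN₀ s hs a ha
      have := htk_ge b hb
      omega
    · intro f hf c
      rw [hspan] at hf
      have h1η : (0:ℝ) < 1 + η := by linarith
      rcases le_or_gt (|c| * ε) (2 * ‖f‖) with hc | hc
      · -- small c: use the net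
        obtain ⟨ψ, hψΨ, hψf⟩ := hΨ2 f hf
        have hψn : ‖ψ‖ ≤ 1 := hΨ1 ψ hψΨ
        have hb1 : |ψ (f + c • xk)| ≤ ‖f + c • xk‖ := by
          calc |ψ (f + c • xk)| ≤ ‖ψ‖ * ‖f + c • xk‖ := ψ.le_opNorm _
            _ ≤ 1 * ‖f + c • xk‖ := mul_le_mul_of_nonneg_right hψn (norm_nonneg _)
            _ = ‖f + c • xk‖ := one_mul _
        have hb2 : (1 - δ) * ‖f‖ - |c| * δ ≤ |ψ (f + c • xk)| := by
          have : ψ (f + c • xk) = ψ f + c * ψ xk := by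
            rw [map_add, map_smul]; rfl
          rw [this]
          have habs : |c * ψ xk| ≤ |c| * δ := by
            rw [abs_mul]
            exact mul_le_mul_of_nonneg_left (hxk_small ψ hψΨ) (abs_nonneg c)
          calc (1 - δ) * ‖f‖ - |c| * δ ≤ |ψ f| - |c * ψ xk| := by linarith
            _ ≤ |ψ f + c * ψ xk| := by
                rcases abs_cases (ψ f + c * ψ xk) with ⟨he, _⟩ | ⟨he, _⟩ <;>
                  rcases abs_cases (ψ f) with ⟨h1, _⟩ | ⟨h1, _⟩ <;>
                  rcases abs_cases (c * ψ xk) with ⟨h2, _⟩ | ⟨h2, _⟩ <;>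
                  rw [he] <;> linarith
        -- |c| ≤ 2‖f‖/ε hence |c|*δ ≤ 2‖f‖δ/ε
        have hcd : |c| * δ ≤ 2 * ‖f‖ * δ / ε := by
          rw [div_eq_mul_inv]
          have : |c| ≤ 2 * ‖f‖ / ε := by
            rw [le_div_iff₀ hε]; linarith
          calc |c| * δ ≤ (2 * ‖f‖ / ε) * δ := mul_le_mul_of_nonneg_right this hδ.le
            _ = 2 * ‖f‖ * δ * ε⁻¹ := by ring
        have hkey : ‖f‖ / (1 + η) ≤ ‖f + c • xk‖ := by
          have hδval : δ * (1 + 2 / ε) = η / (1 + η) := by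
            rw [hδ_def]
            field_simp
          have : (1 - δ) * ‖f‖ - 2 * ‖f‖ * δ / ε = ‖f‖ * (1 - δ * (1 + 2/ε)) := by
            field_simp; ring
          have h5 : ‖f‖ * (1 - δ * (1 + 2/ε)) ≤ ‖f + c • xk‖ := by
            rw [← this]; linarith
          rw [hδval] at h5
          have h6 : 1 - η / (1 + η) = 1 / (1 + η) := by field_simp; ring
          rw [h6] at h5
          calc ‖f‖ / (1 + η) = ‖f‖ * (1 / (1 + η)) := by ring
            _ ≤ ‖f + c • xk‖ := h5
        rw [div_le_iff₀ h1η] at hkey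
        calc ‖f‖ ≤ ‖f + c • xk‖ * (1 + η) := hkey
          _ = (1 + η) * ‖f + c • xk‖ := mul_comm _ _
      · -- big c
        have h1 : ‖f‖ ≤ ‖f + c • xk‖ := by
          have h2 : |c| * ε ≤ |c| * ‖xk‖ := by
            apply mul_le_mul_of_nonneg_left htk_norm (abs_nonneg c)
          have h3 : ‖c • xk‖ - ‖f‖ ≤ ‖f + c • xk‖ := by
            have := norm_add_le (f + c • xk) (-f)
            simp only [add_neg_cancel_comm, norm_neg] at this
            linarith
          rw [norm_smul, Real.norm_eq_abs] at h3
          linarith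
        calc ‖f‖ ≤ ‖f + c • xk‖ := h1
          _ ≤ (1 + η) * ‖f + c • xk‖ := by nlinarith [norm_nonneg (f + c • xk)]
  -- the recursion
  choose pick hpick using hstep
  set L : ℕ → List (Finset ℕ) := fun k => Nat.rec [] (fun _ l => l ++ [pick l]) k with hL_def
  have hL : ∀ k, L (k+1) = L k ++ [pick (L k)] := fun k => rfl
  set t : ℕ → Finset ℕ := fun k => pick (L k) with ht_def
  have hLk : ∀ k, L k = (List.range k).map t := by
    intro k
    induction k with
    | zero => rfl
    | succ k ih =>
      rw [hL, ih, List.range_succ, List.map_append]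
      congr 1
      rw [List.map_singleton, ← ih]
  have hmem : ∀ j k, j < k → t j ∈ L k := by
    intro j k hjk
    rw [hLk]
    exact List.mem_map_of_mem (f := t) (List.mem_range.mpr hjk)
  have hsetL : ∀ k, {y : E | ∃ s ∈ L k, y = ∑ i ∈ s, e i}
      = (fun j => ∑ i ∈ t j, e i) '' Set.Iio k := by
    intro k
    ext y
    simp only [Set.mem_setOf_eq, Set.mem_image, Set.mem_Iio, hLk, List.mem_map,
      List.mem_range]
    constructor
    · rintro ⟨s, ⟨j, hj, rfl⟩, rfl⟩; exact ⟨j, hj, rfl⟩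
    · rintro ⟨j, hj, rfl⟩; exact ⟨t j, ⟨j, hj, rfl⟩, rfl⟩
  have hlen : ∀ k, (L k).length = k := by
    intro k; rw [hLk, List.length_map, List.length_range]
  refine ⟨t, fun k => (hpick (L k)).2.1, ?_, ?_⟩
  · intro j k hjk a ha b hb
    exact (hpick (L k)).1 (t j) (hmem j k hjk) a ha b hb
  · intro k f hf c
    have := (hpick (L k)).2.2 f (by rw [hsetL k]; exact hf) c
    rwa [hlen k] at this

lemma exp_half_lt_two : Real.exp (1/2 : ℝ) < 2 := by
  have h1 : Real.exp (1/2 : ℝ) ^ 2 = Real.exp 1 := by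
    rw [← Real.exp_nat_mul]; norm_num
  nlinarith [Real.exp_one_lt_d9, Real.exp_pos (1/2 : ℝ)]

lemma prod_bound (m n : ℕ) : (∏ k ∈ Finset.Ico m n, (1 + (1/2 : ℝ)^(k+2))) ≤ 2 := by
  have hsum : ∑ k ∈ Finset.Ico m n, (1/2 : ℝ)^(k+2) ≤ 1/2 := by
    have h1 : ∑ k ∈ Finset.Ico m n, (1/2 : ℝ)^(k+2) ≤ ∑ k ∈ Finset.range n, (1/2 : ℝ)^(k+2) := by
      apply Finset.sum_le_sum_of_subset_of_nonneg
      · intro k hk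
        rw [Finset.mem_range]
        exact (Finset.mem_Ico.mp hk).2
      · intro k _ _; positivity
    have h2 : ∑ k ∈ Finset.range n, (1/2 : ℝ)^(k+2) = (∑ k ∈ Finset.range n, (1/2 : ℝ)^k) * (1/4) := by
      rw [Finset.sum_mul]
      exact Finset.sum_congr rfl (fun k _ => by rw [pow_add]; norm_num
        )
    have h3 : ∑ k ∈ Finset.range n, (1/2 : ℝ)^k ≤ 2 := sum_geometric_two_le n
    nlinarith [Finset.sum_nonneg (fun k (_ : k ∈ Finset.range n) => by positivity :
      ∀ k ∈ Finset.range n, (0:ℝ) ≤ (1/2 : ℝ)^k)]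
  calc (∏ k ∈ Finset.Ico m n, (1 + (1/2 : ℝ)^(k+2)))
      ≤ ∏ k ∈ Finset.Ico m n, Real.exp ((1/2 : ℝ)^(k+2)) :=
        Finset.prod_le_prod (fun k _ => by positivity)
          (fun k _ => by linarith [Real.add_one_le_exp ((1/2 : ℝ)^(k+2))])
    _ = Real.exp (∑ k ∈ Finset.Ico m n, (1/2 : ℝ)^(k+2)) := (Real.exp_sum _ _).symm
    _ ≤ Real.exp (1/2) := Real.exp_le_exp.mpr hsum
    _ ≤ 2 := exp_half_lt_two.le

lemma contains_c0_of_blocks {E : Type*} [NormedAddCommGroup E] [NormedSpace ℝ E] [CompleteSpace E]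
    (C : ℝ) (hC : 0 < C) {ε : ℝ} (hε : 0 < ε) (x : ℕ → E)
    (hx1 : ∀ k, ε ≤ ‖x k‖)
    (hxC : ∀ φ : E →L[ℝ] ℝ, ∀ u : Finset ℕ, ∑ k ∈ u, |φ (x k)| ≤ C * ‖φ‖)
    (hx3 : ∀ k (f : E), f ∈ Submodule.span ℝ (x '' Set.Iio k) →
      ∀ c : ℝ, ‖f‖ ≤ (1 + (1/2 : ℝ)^(k+2)) * ‖f + c • x k‖) :
    ContainsCopyOfC0 E := by
  classical
  -- finite sums are controlled by sup of coefficients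
  have hL2 : ∀ (a : ℕ → ℝ) (M : ℝ), 0 ≤ M → ∀ u : Finset ℕ, (∀ k ∈ u, |a k| ≤ M) →
      ‖∑ k ∈ u, a k • x k‖ ≤ C * M := by
    intro a M hM u hu
    refine NormedSpace.norm_le_dual_bound ℝ _ (mul_nonneg hC.le hM) (fun φ => ?_)
    rw [map_sum]
    calc ‖∑ k ∈ u, φ (a k • x k)‖ = |∑ k ∈ u, a k * φ (x k)| := by
          rw [Real.norm_eq_abs]
          congr 1
          exact Finset.sum_congr rfl (fun k _ => by rw [map_smul]; rfl)
      _ ≤ ∑ k ∈ u, |a k * φ (x k)| := Finset.abs_sum_le_sum_abs _ _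
      _ ≤ ∑ k ∈ u, M * |φ (x k)| := Finset.sum_le_sum (fun k hk => by
          rw [abs_mul]
          exact mul_le_mul_of_nonneg_right (hu k hk) (abs_nonneg _))
      _ = M * ∑ k ∈ u, |φ (x k)| := by rw [Finset.mul_sum]
      _ ≤ M * (C * ‖φ‖) := mul_le_mul_of_nonneg_left (hxC φ u) hM
      _ = C * M * ‖φ‖ := by ring
  -- basic sequence inequality
  have hbasic : ∀ (a : ℕ → ℝ) (m n : ℕ), m ≤ n →
      ‖∑ k ∈ Finset.range m, a k • x k‖ ≤
        (∏ k ∈ Finset.Ico m n, (1 + (1/2 : ℝ)^(k+2))) * ‖∑ k ∈ Finset.range n, a k • x k‖ := by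
    intro a m n hmn
    induction n, hmn using Nat.le_induction with
    | base => simp
    | succ n hmn ih =>
      have hf : (∑ k ∈ Finset.range n, a k • x k) ∈ Submodule.span ℝ (x '' Set.Iio n) :=
        Submodule.sum_mem _ (fun k hk => Submodule.smul_mem _ _
          (Submodule.subset_span ⟨k, Finset.mem_range.mp hk, rfl⟩))
      have hstep := hx3 n _ hf (a n)
      have hprod_pos : 0 < ∏ k ∈ Finset.Ico m n, (1 + (1/2 : ℝ)^(k+2)) :=
        Finset.prod_pos (fun k _ => by positivity)
      calc ‖∑ k ∈ Finset.range m, a k • x k‖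
          ≤ (∏ k ∈ Finset.Ico m n, (1 + (1/2 : ℝ)^(k+2))) * ‖∑ k ∈ Finset.range n, a k • x k‖ := ih
        _ ≤ (∏ k ∈ Finset.Ico m n, (1 + (1/2 : ℝ)^(k+2))) *
            ((1 + (1/2 : ℝ)^(n+2)) * ‖(∑ k ∈ Finset.range n, a k • x k) + a n • x n‖) :=
            mul_le_mul_of_nonneg_left hstep hprod_pos.le
        _ = (∏ k ∈ Finset.Ico m (n+1), (1 + (1/2 : ℝ)^(k+2))) * ‖∑ k ∈ Finset.range (n+1), a k • x k‖ := by
            rw [Finset.prod_Ico_succ_top hmn, Finset.sum_range_succ]; ring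
  have hbasic2 : ∀ (a : ℕ → ℝ) (m n : ℕ), m ≤ n →
      ‖∑ k ∈ Finset.range m, a k • x k‖ ≤ 2 * ‖∑ k ∈ Finset.range n, a k • x k‖ := by
    intro a m n hmn
    refine (hbasic a m n hmn).trans ?_
    exact mul_le_mul_of_nonneg_right (prod_bound m n) (norm_nonneg _)
  have hcoef : ∀ (a : ℕ → ℝ) (m n : ℕ), m + 1 ≤ n →
      |a m| * ε ≤ 4 * ‖∑ k ∈ Finset.range n, a k • x k‖ := by
    intro a m n hmn
    have h1 := hbasic2 a (m+1) n hmn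
    have h2 := hbasic2 a m n (by omega)
    have h3 : a m • x m = (∑ k ∈ Finset.range (m+1), a k • x k) - (∑ k ∈ Finset.range m, a k • x k) := by
      rw [Finset.sum_range_succ]; abel
    have h4 : ‖a m • x m‖ ≤ ‖∑ k ∈ Finset.range (m+1), a k • x k‖ + ‖∑ k ∈ Finset.range m, a k • x k‖ := by
      rw [h3]; exact norm_sub_le _ _
    have h5 : |a m| * ε ≤ ‖a m • x m‖ := by
      rw [norm_smul, Real.norm_eq_abs]
      exact mul_le_mul_of_nonneg_left (hx1 m) (abs_nonneg _)
    linarith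
  -- facts about C₀ functions
  have happ : ∀ (a : C₀(ℕ, ℝ)) (k : ℕ), |a k| ≤ ‖a‖ := by
    intro a k
    rw [← ZeroAtInftyContinuousMap.norm_toBCF_eq_norm, ← Real.norm_eq_abs]
    exact a.toBCF.norm_coe_le_norm k
  have hzero : ∀ a : C₀(ℕ, ℝ), Filter.Tendsto (fun k => a k) Filter.atTop (nhds (0:ℝ)) := by
    intro a
    have := ZeroAtInftyContinuousMap.zero_at_infty' a
    rwa [cocompact_eq_atTop (α := ℕ)] at this
  -- summability
  have hSummable : ∀ a : C₀(ℕ, ℝ), Summable (fun k => a k • x k) := by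
    intro a
    rw [summable_iff_vanishing]
    intro U hU
    obtain ⟨r, hr, hball⟩ := Metric.mem_nhds_iff.mp hU
    have hr2 : 0 < r / (2 * C) := by positivity
    obtain ⟨N, hN⟩ := (Metric.tendsto_atTop.mp (hzero a)) (r / (2 * C)) hr2
    refine ⟨Finset.range N, fun u hu => ?_⟩
    apply hball
    rw [Metric.mem_ball, dist_zero_right]
    have hbound : ‖∑ k ∈ u, a k • x k‖ ≤ C * (r / (2 * C)) := by
      refine hL2 a _ hr2.le u (fun k hk => ?_)
      have hkN : N ≤ k := by
        by_contra hlt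
        exact (Finset.disjoint_left.mp hu hk (Finset.mem_range.mpr (by omega))).elim
      have := hN k hkN
      rw [Real.dist_eq, _root_.sub_zero] at this
      exact this.le
    have : C * (r / (2 * C)) = r / 2 := by field_simp
    rw [this] at hbound
    calc ‖∑ k ∈ u, a k • x k‖ ≤ r / 2 := hbound
      _ < r := by linarith
  set F : C₀(ℕ, ℝ) → E := fun a => ∑' k, a k • x k with hF_def
  have hFbound : ∀ a : C₀(ℕ, ℝ), ‖F a‖ ≤ C * ‖a‖ := by
    intro a
    refine le_of_tendsto' (hSummable a).hasSum.norm (fun u => ?_)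
    exact hL2 a ‖a‖ (norm_nonneg a) u (fun k _ => happ a k)
  have hFadd : ∀ a b : C₀(ℕ, ℝ), F (a + b) = F a + F b := by
    intro a b
    rw [hF_def]
    simp only
    rw [← Summable.tsum_add (hSummable a) (hSummable b)]
    congr 1
    ext k
    simp [add_smul]
  have hFsmul : ∀ (c : ℝ) (a : C₀(ℕ, ℝ)), F (c • a) = c • F a := by
    intro c a
    rw [hF_def]
    simp only
    rw [← ((hSummable a).hasSum.const_smul c).tsum_eq]
    congr 1
    ext k
    simp [smul_smul]
  set Tlin : C₀(ℕ, ℝ) →ₗ[ℝ] E :=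
    { toFun := F
      map_add' := hFadd
      map_smul' := hFsmul } with hTlin_def
  set T : C₀(ℕ, ℝ) →L[ℝ] E := Tlin.mkContinuous C hFbound with hT_def
  have hTF : ∀ a, T a = F a := fun a => rfl
  -- lower bound
  have hlow : ∀ (a : C₀(ℕ, ℝ)) (m : ℕ), |a m| * ε ≤ 4 * ‖F a‖ := by
    intro a m
    have ht : Filter.Tendsto (fun n => 4 * ‖∑ k ∈ Finset.range n, a k • x k‖) Filter.atTop (nhds (4 * ‖F a‖)) :=
      ((hSummable a).hasSum.tendsto_sum_nat.norm).const_mul 4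
    refine ge_of_tendsto ht ?_
    filter_upwards [Filter.eventually_ge_atTop (m+1)] with n hn
    exact hcoef a m n hn
  refine ⟨T, ε/4, by positivity, fun a => ?_⟩
  have h6 : ‖a‖ ≤ 4 * ‖F a‖ / ε := by
    rw [← ZeroAtInftyContinuousMap.norm_toBCF_eq_norm]
    refine (BoundedContinuousFunction.norm_le (by positivity)).mpr (fun m => ?_)
    rw [Real.norm_eq_abs]
    rw [le_div_iff₀ hε]
    exact hlow a m
  rw [hTF]
  calc ε/4 * ‖a‖ ≤ ε/4 * (4 * ‖F a‖ / ε) := by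
        apply mul_le_mul_of_nonneg_left h6 (by positivity)
    _ = ‖F a‖ := by field_simp

/-- Bessaga–Pełczyński: in a Banach space without a copy of `c₀`, every weakly
unconditionally Cauchy series converges unconditionally. -/
theorem stmt_2 {E : Type*} [NormedAddCommGroup E] [NormedSpace ℝ E] [CompleteSpace E]
    (hE : ¬ ContainsCopyOfC0 E)
    (e : ℕ → E) (C : ℝ) (hC : 0 < C)
    (h : ∀ φ : E →L[ℝ] ℝ, ‖φ‖ = 1 →
      ∀ n : ℕ, ∑ i ∈ Finset.range n, |φ (e i)| ≤ C) :
    Summable e := by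
  classical
  by_contra hsum
  have hwuc : ∀ φ : E →L[ℝ] ℝ, ∀ s : Finset ℕ, ∑ i ∈ s, |φ (e i)| ≤ C * ‖φ‖ := by
    intro φ s
    rcases eq_or_ne φ 0 with rfl | hφ
    · simp
    · have hφn : 0 < ‖φ‖ := norm_pos_iff.mpr hφ
      set ψ : E →L[ℝ] ℝ := ‖φ‖⁻¹ • φ with hψ_def
      have hψn : ‖ψ‖ = 1 := by
        rw [hψ_def, norm_smul (α := ℝ) (β := E →L[ℝ] ℝ) (‖φ‖⁻¹) φ]
        simp [abs_of_pos (inv_pos.mpr hφn), inv_mul_cancel₀ hφn.ne']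
      have h1 := h ψ hψn (s.sup id + 1)
      have h2 : ∑ i ∈ s, |ψ (e i)| ≤ C := by
        refine le_trans (Finset.sum_le_sum_of_subset_of_nonneg ?_
          (fun i _ _ => abs_nonneg _)) h1
        intro i hi
        rw [Finset.mem_range]
        have := Finset.le_sup (f := id) hi
        simp only [id_eq] at this
        omega
      have h3 : ∀ i : ℕ, |ψ (e i)| = ‖φ‖⁻¹ * |φ (e i)| := by
        intro i
        rw [hψ_def]
        simp only [ContinuousLinearMap.coe_smul', Pi.smul_apply, _root_.smul_eq_mul]
        rw [abs_mul, abs_of_pos (inv_pos.mpr hφn)]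
      rw [Finset.sum_congr rfl (fun i _ => h3 i), ← Finset.mul_sum,
        inv_mul_le_iff₀ hφn] at h2
      linarith
  rw [summable_iff_vanishing] at hsum
  push_neg at hsum
  obtain ⟨U, hU, hUns⟩ := hsum
  obtain ⟨r, hr, hball⟩ := Metric.mem_nhds_iff.mp hU
  have hns : ∀ s : Finset ℕ, ∃ t : Finset ℕ, Disjoint t s ∧ r ≤ ‖∑ i ∈ t, e i‖ := by
    intro s
    obtain ⟨t, htd, htU⟩ := hUns s
    refine ⟨t, htd, ?_⟩
    by_contra hlt
    push_neg at hlt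
    exact htU (hball (mem_ball_zero_iff.mpr hlt))
  obtain ⟨t, hx1, hx2, hx3⟩ := exists_blocks e C hwuc hr hns
  have hdisj : ∀ j k, j ≠ k → Disjoint (t j) (t k) := by
    intro j k hjk
    rw [Finset.disjoint_left]
    intro a haj hak
    rcases lt_or_gt_of_ne hjk with hlt | hlt
    · exact absurd (hx2 j k hlt a haj a hak) (lt_irrefl a)
    · exact absurd (hx2 k j hlt a hak a haj) (lt_irrefl a)
  have hxC : ∀ φ : E →L[ℝ] ℝ, ∀ u : Finset ℕ,
      ∑ k ∈ u, |φ (∑ i ∈ t k, e i)| ≤ C * ‖φ‖ := by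
    intro φ u
    calc ∑ k ∈ u, |φ (∑ i ∈ t k, e i)| ≤ ∑ k ∈ u, ∑ i ∈ t k, |φ (e i)| :=
        Finset.sum_le_sum (fun k _ => by
          rw [map_sum]; exact Finset.abs_sum_le_sum_abs _ _)
      _ = ∑ i ∈ u.biUnion t, |φ (e i)| :=
        (Finset.sum_biUnion (fun j _ k _ hjk => hdisj j k hjk)).symm
      _ ≤ C * ‖φ‖ := hwuc φ _
  exact hE (contains_c0_of_blocks C hC hr (fun k => ∑ i ∈ t k, e i) hx1 hxC hx3)
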